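/- arXiv:1006.5583 — 3 statements merged into one kernel-verified Lean document; each statement's English description precedes it below -/
import Mathlib

section
/- Let f : (1,∞) → ℝ be a positive C² function with |f''| bounded, such that f is nonincreasing on some interval (a,∞) with a > 1, and such that f''(x) → 0 as x → ∞. Then f'(x)²/f(x) → 0 as x → ∞; in particular, for all sufficiently large x one has f'(x)² ≤ 2 f(x) · sup_{s ≥ x} |f''(s)|. -/
/-!
Landau's inequality on a half-line: if `f ≥ 0` and `f'' ≤ M` on `[x, ∞)`, Taylor's theorem gives
`0 ≤ f (x + t) ≤ f x + t f' x + t² M / 2` for all `t ≥ 0`. When `f' x ≤ 0` (which is where the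
monotonicity of `f` enters) the vertex `t = -f' x / M` of this parabola lies in `t ≥ 0`, and
evaluating there yields `f' x ² ≤ 2 f x M`. Taking for `M` the supremum of `|f''|` over `[x, ∞)`,
which tends to `0` with `f''`, gives both claims.
-/

open Filter Set Topology

/-- `sup_{s ≥ x} |g s|`; it is the junk value `0` when `|g|` is unbounded on `[x, ∞)`. -/
noncomputable def tailAbsSup (g : ℝ → ℝ) (x : ℝ) : ℝ :=
  sSup ((fun s => |g s|) '' Ici x)

section tailAbsSup

variable {g : ℝ → ℝ} {x : ℝ}

lemma tailAbsSup_nonneg (g : ℝ → ℝ) (x : ℝ) : 0 ≤ tailAbsSup g x :=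
  Real.sSup_nonneg (by rintro _ ⟨s, -, rfl⟩; exact abs_nonneg _)

lemma abs_le_tailAbsSup (hg : BddAbove ((fun s => |g s|) '' Ici x)) {y : ℝ} (hxy : x ≤ y) :
    |g y| ≤ tailAbsSup g x :=
  le_csSup hg ⟨y, hxy, rfl⟩

lemma tailAbsSup_le {ε : ℝ} (h : ∀ y, x ≤ y → |g y| ≤ ε) : tailAbsSup g x ≤ ε :=
  csSup_le ⟨_, x, self_mem_Ici, rfl⟩ (by rintro _ ⟨y, hy, rfl⟩; exact h y hy)

lemma eventually_bddAbove_abs_image_Ici (hg : Tendsto g atTop (𝓝 0)) :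
    ∀ᶠ x in atTop, BddAbove ((fun s => |g s|) '' Ici x) := by
  obtain ⟨N, hN⟩ := Metric.tendsto_atTop.1 hg 1 one_pos
  filter_upwards [eventually_ge_atTop N] with x hx
  refine ⟨1, ?_⟩
  rintro _ ⟨y, hy, rfl⟩
  simpa [Real.dist_0_eq_abs] using (hN y (hx.trans hy)).le

lemma tendsto_tailAbsSup_zero (hg : Tendsto g atTop (𝓝 0)) :
    Tendsto (tailAbsSup g) atTop (𝓝 0) := by
  refine tendsto_order.2 ⟨fun b hb => Eventually.of_forall fun x =>
    hb.trans_le (tailAbsSup_nonneg g x), fun b hb => ?_⟩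
  obtain ⟨N, hN⟩ := Metric.tendsto_atTop.1 hg (b / 2) (half_pos hb)
  filter_upwards [eventually_ge_atTop N] with x hx
  refine (tailAbsSup_le fun y hy => ?_).trans_lt (half_lt_self hb)
  simpa [Real.dist_0_eq_abs] using (hN y (hx.trans hy)).le

end tailAbsSup

lemma image_le_of_hasDerivAt_le_hasDerivAt {g g' B B' : ℝ → ℝ} {a b : ℝ}
    (hg : ∀ t ∈ Icc a b, HasDerivAt g (g' t) t) (hB : ∀ t ∈ Icc a b, HasDerivAt B (B' t) t)
    (ha : g a ≤ B a) (hle : ∀ t ∈ Ico a b, g' t ≤ B' t) : ∀ t ∈ Icc a b, g t ≤ B t :=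
  image_le_of_deriv_right_le_deriv_boundary
    (fun t ht => (hg t ht).continuousAt.continuousWithinAt)
    (fun t ht => (hg t (Ico_subset_Icc_self ht)).hasDerivWithinAt) ha
    (fun t ht => (hB t ht).continuousAt.continuousWithinAt)
    (fun t ht => (hB t (Ico_subset_Icc_self ht)).hasDerivWithinAt) hle

theorem le_taylor_of_second_deriv_le {f f' f'' : ℝ → ℝ} {x y M : ℝ} (hxy : x ≤ y)
    (hf : ∀ t ∈ Icc x y, HasDerivAt f (f' t) t) (hf' : ∀ t ∈ Icc x y, HasDerivAt f' (f'' t) t)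
    (hM : ∀ t ∈ Ico x y, f'' t ≤ M) :
    f y ≤ f x + (y - x) * f' x + (y - x) ^ 2 * M / 2 := by
  have hB₁ (t : ℝ) : HasDerivAt (fun t => f' x + (t - x) * M) M t := by
    simpa using (((hasDerivAt_id' t).sub_const x).mul_const M).const_add (f' x)
  have hB₂ (t : ℝ) : HasDerivAt (fun t => f x + (t - x) * f' x + (t - x) ^ 2 * M / 2)
      (f' x + (t - x) * M) t :=
    (((((hasDerivAt_id' t).sub_const x).mul_const (f' x)).const_add (f x)).fun_add
      (((((hasDerivAt_id' t).sub_const x).fun_pow 2).mul_const M).div_const 2)).congr_deriv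
      (by ring)
  have hf'_le : ∀ t ∈ Icc x y, f' t ≤ f' x + (t - x) * M :=
    image_le_of_hasDerivAt_le_hasDerivAt hf' (fun t _ => hB₁ t) (by simp) hM
  exact image_le_of_hasDerivAt_le_hasDerivAt hf (fun t _ => hB₂ t) (by simp)
    (fun t ht => hf'_le t (Ico_subset_Icc_self ht)) y ⟨hxy, le_rfl⟩

lemma sq_le_two_mul_mul_of_forall_nonneg {c d M : ℝ} (hd : d ≤ 0) (hM : 0 ≤ M)
    (h : ∀ t, 0 ≤ t → 0 ≤ c + t * d + t ^ 2 * M / 2) : d ^ 2 ≤ 2 * c * M := by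
  rcases hM.lt_or_eq with hM | rfl
  · have hvertex := h (-d / M) (div_nonneg (neg_nonneg.2 hd) hM.le)
    have hvalue : c + -d / M * d + (-d / M) ^ 2 * M / 2 = c - d ^ 2 / (2 * M) := by
      field_simp
      ring
    rw [hvalue, sub_nonneg, div_le_iff₀ (by positivity)] at hvertex
    linarith
  · rcases hd.lt_or_eq with hd | rfl
    · have hfar := h ((|c| + 1) / -d) (div_nonneg (by positivity) (by linarith))
      have hvalue : c + (|c| + 1) / -d * d + ((|c| + 1) / -d) ^ 2 * 0 / 2 = c - |c| - 1 := by
        field_simp [hd.ne]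
        ring
      linarith [le_abs_self c]
    · simp

theorem sq_le_two_mul_mul_tailAbsSup {f f' f'' : ℝ → ℝ} {x : ℝ}
    (hf : ∀ t ∈ Ici x, HasDerivAt f (f' t) t) (hf' : ∀ t ∈ Ici x, HasDerivAt f' (f'' t) t)
    (hnonneg : ∀ t ∈ Ici x, 0 ≤ f t) (hx : f' x ≤ 0)
    (hbdd : BddAbove ((fun s => |f'' s|) '' Ici x)) :
    f' x ^ 2 ≤ 2 * f x * tailAbsSup f'' x := by
  refine sq_le_two_mul_mul_of_forall_nonneg hx (tailAbsSup_nonneg f'' x) fun t ht => ?_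
  have hxt : x ≤ x + t := le_add_of_nonneg_right ht
  have htaylor := le_taylor_of_second_deriv_le hxt (fun s hs => hf s hs.1) (fun s hs => hf' s hs.1)
    (fun s hs => (le_abs_self _).trans (abs_le_tailAbsSup hbdd hs.1))
  rw [add_sub_cancel_left] at htaylor
  linarith [hnonneg (x + t) hxt]

theorem stmt_3_general (f f' f'' : ℝ → ℝ) (a : ℝ)
    (hderiv1 : ∀ x ∈ Set.Ioi (1 : ℝ), HasDerivAt f (f' x) x)
    (hderiv2 : ∀ x ∈ Set.Ioi (1 : ℝ), HasDerivAt f' (f'' x) x)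
    (hpos : ∀ x ∈ Set.Ioi (1 : ℝ), 0 < f x)
    (hmono : AntitoneOn f (Set.Ioi a))
    (hf''0 : Filter.Tendsto f'' Filter.atTop (nhds 0)) :
    Filter.Tendsto (fun x => (f' x) ^ 2 / f x) Filter.atTop (nhds 0) ∧
      ∀ᶠ x in Filter.atTop,
        (f' x) ^ 2 ≤ 2 * f x * sSup ((fun s => |f'' s|) '' Set.Ici x) := by
  have hbound : ∀ᶠ x in atTop, f' x ^ 2 ≤ 2 * f x * tailAbsSup f'' x := by
    filter_upwards [eventually_gt_atTop 1, eventually_gt_atTop a,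
      eventually_bddAbove_abs_image_Ici hf''0] with x hx1 hxa hbdd
    have hIci : Ici x ⊆ Ioi 1 := Ici_subset_Ioi.2 hx1
    have hf'x : f' x ≤ 0 := (hderiv1 x hx1).hasDerivWithinAt.nonpos_of_antitoneOn
      (isOpen_Ioi.preperfect x hxa) hmono
    exact sq_le_two_mul_mul_tailAbsSup (fun t ht => hderiv1 t (hIci ht))
      (fun t ht => hderiv2 t (hIci ht)) (fun t ht => (hpos t (hIci ht)).le) hf'x hbdd
  refine ⟨squeeze_zero' ?_ ?_ (by simpa using (tendsto_tailAbsSup_zero hf''0).const_mul 2),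
    hbound⟩
  · filter_upwards [eventually_gt_atTop 1] with x hx
    exact div_nonneg (sq_nonneg _) (hpos x hx).le
  · filter_upwards [eventually_gt_atTop 1, hbound] with x hx hx'
    rw [div_le_iff₀ (hpos x hx)]
    linarith

/-- If `f` is a positive twice continuously differentiable function on `(1,∞)` with `|f''|`
bounded, `f` nonincreasing on some `(a,∞)` with `a > 1`, and `f''(x) → 0` as `x → ∞`, then
`f'(x)²/f(x) → 0` as `x → ∞`; in particular, for all sufficiently large `x`,
`f'(x)² ≤ 2 f(x) · sup_{s ≥ x} |f''(s)|`. -/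
theorem stmt_3 (f f' f'' : ℝ → ℝ) (a : ℝ) (ha : 1 < a)
    (hderiv1 : ∀ x ∈ Set.Ioi (1 : ℝ), HasDerivAt f (f' x) x)
    (hderiv2 : ∀ x ∈ Set.Ioi (1 : ℝ), HasDerivAt f' (f'' x) x)
    (hcont : ContinuousOn f'' (Set.Ioi (1 : ℝ)))
    (hpos : ∀ x ∈ Set.Ioi (1 : ℝ), 0 < f x)
    (hf''bdd : BddAbove ((fun s => |f'' s|) '' Set.Ioi (1 : ℝ)))
    (hmono : AntitoneOn f (Set.Ioi a))
    (hf''0 : Filter.Tendsto f'' Filter.atTop (nhds 0)) :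
    Filter.Tendsto (fun x => (f' x) ^ 2 / f x) Filter.atTop (nhds 0) ∧
      ∀ᶠ x in Filter.atTop,
        (f' x) ^ 2 ≤ 2 * f x * sSup ((fun s => |f'' s|) '' Set.Ici x) :=
  stmt_3_general f f' f'' a hderiv1 hderiv2 hpos hmono hf''0
end

section
/- Let f : (1,∞) → ℝ be a positive C² function with f and |f''| bounded, f nonincreasing on some interval (a,∞) with a > 1, and f(x) → 0, f''(x) → 0 as x → ∞. Define V(x) = (1/4)(f'(x)/f(x))² + (1/2)(f'/f)'(x). Then f(x)·V(x) → 0 as x → ∞. -/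
/-!
Writing `V = (1/4)(f'/f)² + (1/2)(f'/f)'` out gives `f V = f''/2 - f'²/(4f)`, so it suffices that
`f'²/f → 0`. This is a Landau-type inequality: if `f ≥ 0` is nonincreasing on `[x, ∞)` and
`|f''| ≤ M` there, Taylor's formula on `[x, x + h]` gives `h |f'(x)| ≤ f(x) + M h²`, and the
choice `h = √(f(x)/M)` yields `f'(x)² ≤ 4 M f(x)`. Since `f'' → 0`, `M` can be taken arbitrarily
small for large `x`.
-/

open Set Filter Topology

section Landau

variable {f f' f'' : ℝ → ℝ} {M x y : ℝ}

theorem abs_sub_sub_mul_deriv_le (hxy : x ≤ y)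
    (hf : ∀ t ∈ Icc x y, HasDerivWithinAt f (f' t) (Icc x y) t)
    (hf' : ∀ t ∈ Icc x y, HasDerivWithinAt f' (f'' t) (Icc x y) t)
    (hM : ∀ t ∈ Icc x y, |f'' t| ≤ M) :
    |f y - f x - (y - x) * f' x| ≤ M * (y - x) ^ 2 := by
  have hx : x ∈ Icc x y := left_mem_Icc.2 hxy
  have hM₀ : 0 ≤ M := (abs_nonneg _).trans (hM x hx)
  have hslope : ∀ t ∈ Icc x y, ‖f' t - f' x‖ ≤ M * (y - x) := fun t ht => by
    have := (convex_Icc x y).norm_image_sub_le_of_norm_hasDerivWithin_le hf' hM hx ht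
    rw [Real.norm_eq_abs, Real.norm_eq_abs, abs_of_nonneg (sub_nonneg.2 ht.1)] at this
    exact this.trans (mul_le_mul_of_nonneg_left (by linarith [ht.2]) hM₀)
  have hg : ∀ t ∈ Icc x y,
      HasDerivWithinAt (fun t => f t - t * f' x) (f' t - f' x) (Icc x y) t := fun t ht => by
    simpa using (hf t ht).fun_sub ((hasDerivWithinAt_id t _).mul_const (f' x))
  have := (convex_Icc x y).norm_image_sub_le_of_norm_hasDerivWithin_le hg hslope hx
    (right_mem_Icc.2 hxy)
  rw [Real.norm_eq_abs, Real.norm_eq_abs, abs_of_nonneg (sub_nonneg.2 hxy)] at this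
  calc |f y - f x - (y - x) * f' x| = |f y - y * f' x - (f x - x * f' x)| := by ring_nf
    _ ≤ M * (y - x) ^ 2 := by linarith

theorem mul_abs_deriv_le (hxy : x ≤ y)
    (hf : ∀ t ∈ Icc x y, HasDerivWithinAt f (f' t) (Icc x y) t)
    (hf' : ∀ t ∈ Icc x y, HasDerivWithinAt f' (f'' t) (Icc x y) t)
    (hM : ∀ t ∈ Icc x y, |f'' t| ≤ M) (hy : 0 ≤ f y) (hyx : f y ≤ f x) :
    (y - x) * |f' x| ≤ f x + M * (y - x) ^ 2 := by
  have htaylor := abs_sub_sub_mul_deriv_le hxy hf hf' hM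
  have hdiff : |f y - f x| ≤ f x := abs_le.2 ⟨by linarith, by linarith⟩
  calc (y - x) * |f' x| = |(f y - f x) - (f y - f x - (y - x) * f' x)| := by
        rw [sub_sub_cancel, abs_mul, abs_of_nonneg (sub_nonneg.2 hxy)]
    _ ≤ |f y - f x| + |f y - f x - (y - x) * f' x| := abs_sub _ _
    _ ≤ f x + M * (y - x) ^ 2 := add_le_add hdiff htaylor

theorem sq_deriv_le_of_antitoneOn (hM : 0 < M) (hfx : 0 < f x)
    (hf : ∀ t ∈ Ici x, HasDerivAt f (f' t) t) (hf' : ∀ t ∈ Ici x, HasDerivAt f' (f'' t) t)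
    (hf'' : ∀ t ∈ Ici x, |f'' t| ≤ M) (hnonneg : ∀ t ∈ Ici x, 0 ≤ f t)
    (hanti : AntitoneOn f (Ici x)) :
    f' x ^ 2 ≤ 4 * M * f x := by
  set h := √(f x / M)
  have hh : 0 < h := Real.sqrt_pos.2 (by positivity)
  have hMh : M * h ^ 2 = f x := by
    rw [Real.sq_sqrt (by positivity)]
    field_simp
  have hxh : x ≤ x + h := by linarith
  have hsub : Icc x (x + h) ⊆ Ici x := Icc_subset_Ici_self
  have hbound := mul_abs_deriv_le hxh (fun t ht => (hf t (hsub ht)).hasDerivWithinAt)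
    (fun t ht => (hf' t (hsub ht)).hasDerivWithinAt) (fun t ht => hf'' t (hsub ht))
    (hnonneg _ (hsub (right_mem_Icc.2 hxh)))
    (hanti self_mem_Ici (hsub (right_mem_Icc.2 hxh)) hxh)
  rw [add_sub_cancel_left, hMh] at hbound
  have hsq : h ^ 2 * f' x ^ 2 ≤ (2 * f x) ^ 2 := by
    rw [← sq_abs (f' x), ← mul_pow]
    exact pow_le_pow_left₀ (by positivity) (by linarith) 2
  nlinarith

theorem tendsto_sq_deriv_div_atTop {a : ℝ}
    (hf : ∀ t ∈ Ioi a, HasDerivAt f (f' t) t) (hf' : ∀ t ∈ Ioi a, HasDerivAt f' (f'' t) t)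
    (hpos : ∀ t ∈ Ioi a, 0 < f t) (hanti : AntitoneOn f (Ioi a))
    (hf''0 : Tendsto f'' atTop (𝓝 0)) :
    Tendsto (fun x => f' x ^ 2 / f x) atTop (𝓝 0) := by
  refine tendsto_order.2 ⟨fun b hb => ?_, fun b hb => ?_⟩
  · filter_upwards [eventually_gt_atTop a] with x hx
    exact hb.trans_le (div_nonneg (sq_nonneg _) (hpos x hx).le)
  · obtain ⟨X, hX⟩ := Metric.tendsto_atTop.1 hf''0 (b / 8) (by positivity)
    filter_upwards [eventually_gt_atTop (max a X)] with x hx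
    have hsub : Ici x ⊆ Ioi a := Ici_subset_Ioi.2 (lt_of_le_of_lt (le_max_left _ _) hx)
    have hsmall : ∀ t ∈ Ici x, |f'' t| ≤ b / 8 := fun t ht => by
      have := hX t ((le_max_right _ _).trans (hx.le.trans ht))
      rw [Real.dist_eq, sub_zero] at this
      exact this.le
    have hfx := hpos x (hsub self_mem_Ici)
    have := sq_deriv_le_of_antitoneOn (M := b / 8) (by positivity) hfx
      (fun t ht => hf t (hsub ht)) (fun t ht => hf' t (hsub ht)) hsmall
      (fun t ht => (hpos t (hsub ht)).le) (hanti.mono hsub)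
    rw [div_lt_iff₀ hfx]
    nlinarith [mul_pos hb hfx]

end Landau

theorem stmt_4_general (f f' f'' : ℝ → ℝ) (a : ℝ)
    (hderiv1 : ∀ x ∈ Set.Ioi (1 : ℝ), HasDerivAt f (f' x) x)
    (hderiv2 : ∀ x ∈ Set.Ioi (1 : ℝ), HasDerivAt f' (f'' x) x)
    (hpos : ∀ x ∈ Set.Ioi (1 : ℝ), 0 < f x)
    (hmono : AntitoneOn f (Set.Ioi a))
    (hf''0 : Filter.Tendsto f'' Filter.atTop (nhds 0))
    (V : ℝ → ℝ)
    (hV : ∀ x ∈ Set.Ioi (1 : ℝ),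
      V x = (1 / 4) * (f' x / f x) ^ 2 + (1 / 2) * deriv (fun t => f' t / f t) x) :
    Filter.Tendsto (fun x => f x * V x) Filter.atTop (nhds 0) := by
  have hsub : Ioi (max 1 a) ⊆ Ioi 1 := Ioi_subset_Ioi (le_max_left _ _)
  have hquot : Tendsto (fun x => f' x ^ 2 / f x) atTop (𝓝 0) :=
    tendsto_sq_deriv_div_atTop (a := max 1 a) (fun t ht => hderiv1 t (hsub ht))
      (fun t ht => hderiv2 t (hsub ht)) (fun t ht => hpos t (hsub ht))
      (hmono.mono (Ioi_subset_Ioi (le_max_right _ _))) hf''0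
  have hfV : ∀ᶠ x in atTop, f'' x / 2 - f' x ^ 2 / f x / 4 = f x * V x := by
    filter_upwards [eventually_gt_atTop 1] with x hx
    have hfx := (hpos x hx).ne'
    have hd : HasDerivAt (fun t => f' t / f t) ((f'' x * f x - f' x * f' x) / f x ^ 2) x :=
      (hderiv2 x hx).div (hderiv1 x hx) hfx
    rw [hV x hx, hd.deriv]
    field_simp
    ring
  simpa using ((hf''0.div_const 2).sub (hquot.div_const 4)).congr' hfV

/-- Let `f` be a positive twice continuously differentiable function on `(1,∞)` with `f` and
`|f''|` bounded, `f` nonincreasing on some `(a,∞)` with `a > 1`, and `f(x) → 0`,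
`f''(x) → 0` as `x → ∞`. Define `V(x) = (1/4)(f'(x)/f(x))² + (1/2)(f'/f)'(x)`.
Then `f(x)·V(x) → 0` as `x → ∞`. -/
theorem stmt_4 (f f' f'' : ℝ → ℝ) (a : ℝ) (ha : 1 < a)
    (hderiv1 : ∀ x ∈ Set.Ioi (1 : ℝ), HasDerivAt f (f' x) x)
    (hderiv2 : ∀ x ∈ Set.Ioi (1 : ℝ), HasDerivAt f' (f'' x) x)
    (hcont : ContinuousOn f'' (Set.Ioi (1 : ℝ)))
    (hpos : ∀ x ∈ Set.Ioi (1 : ℝ), 0 < f x)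
    (hfbdd : BddAbove (f '' Set.Ioi (1 : ℝ)))
    (hf''bdd : BddAbove ((fun s => |f'' s|) '' Set.Ioi (1 : ℝ)))
    (hmono : AntitoneOn f (Set.Ioi a))
    (hf0 : Filter.Tendsto f Filter.atTop (nhds 0))
    (hf''0 : Filter.Tendsto f'' Filter.atTop (nhds 0))
    (V : ℝ → ℝ)
    (hV : ∀ x ∈ Set.Ioi (1 : ℝ),
      V x = (1 / 4) * (f' x / f x) ^ 2 + (1 / 2) * deriv (fun t => f' t / f t) x) :
    Filter.Tendsto (fun x => f x * V x) Filter.atTop (nhds 0) :=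
  stmt_4_general f f' f'' a hderiv1 hderiv2 hpos hmono hf''0 V hV
end

section
/- Let f, σ, κ : (1,∞) → ℝ be functions such that for every x > 1 one has f(x) > 0, σ(x) > 0, κ(x) ∈ (0, π/(2 f(x))) and κ(x) · tan(κ(x) f(x)) = σ(x). If σ is bounded and f(x) → 0 as x → ∞, then f(x)·κ(x) → 0 as x → ∞. -/
/-!
Writing `θ = κ f ∈ (0, π/2)`, the inequality `θ < tan θ` turns the Robin relation
`κ tan θ = σ` into `(f κ)² = θ² < θ tan θ = σ f ≤ C f`, so `f κ ≤ √(C f) → 0`.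
-/

open Real Filter Topology

lemma sq_lt_mul_tan {θ : ℝ} (h0 : 0 < θ) (h1 : θ < π / 2) : θ ^ 2 < θ * tan θ := by
  rw [sq]
  exact mul_lt_mul_of_pos_left (lt_tan h0 h1) h0

lemma sq_mul_le_of_mul_tan_eq {k r s : ℝ} (hk : 0 < k) (hr : 0 < r) (hkr : k < π / (2 * r))
    (h : k * tan (k * r) = s) : (r * k) ^ 2 ≤ s * r := by
  have hθ : k * r < π / 2 := by
    rw [lt_div_iff₀ (by positivity)] at hkr
    linarith
  calc (r * k) ^ 2 = (k * r) ^ 2 := by ring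
    _ ≤ k * r * tan (k * r) := (sq_lt_mul_tan (mul_pos hk hr) hθ).le
    _ = s * r := by rw [← h]; ring

lemma tendsto_zero_of_nonneg_of_sq_le {α : Type*} {l : Filter α} {g h : α → ℝ}
    (hg : ∀ᶠ x in l, 0 ≤ g x) (hgh : ∀ᶠ x in l, g x ^ 2 ≤ h x) (hh : Tendsto h l (𝓝 0)) :
    Tendsto g l (𝓝 0) := by
  have hsq : Tendsto (fun x => g x ^ 2) l (𝓝 0) :=
    tendsto_of_tendsto_of_tendsto_of_le_of_le' tendsto_const_nhds hh
      (Eventually.of_forall fun x => sq_nonneg (g x)) hgh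
  have hsqrt := (continuous_sqrt.tendsto 0).comp hsq
  rw [sqrt_zero] at hsqrt
  refine hsqrt.congr' ?_
  filter_upwards [hg] with x hx
  exact sqrt_sq hx

theorem stmt_11_general (f σ κ : ℝ → ℝ)
    (hf : ∀ x ∈ Set.Ioi (1 : ℝ), 0 < f x)
    (hκ : ∀ x ∈ Set.Ioi (1 : ℝ), κ x ∈ Set.Ioo 0 (π / (2 * f x)))
    (heq : ∀ x ∈ Set.Ioi (1 : ℝ), κ x * Real.tan (κ x * f x) = σ x)
    (hσbdd : ∃ C : ℝ, ∀ x ∈ Set.Ioi (1 : ℝ), σ x ≤ C)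
    (hf0 : Filter.Tendsto f Filter.atTop (nhds 0)) :
    Filter.Tendsto (fun x => f x * κ x) Filter.atTop (nhds 0) := by
  obtain ⟨C, hC⟩ := hσbdd
  have hCf : Tendsto (fun x => C * f x) atTop (𝓝 0) := by simpa using hf0.const_mul C
  refine tendsto_zero_of_nonneg_of_sq_le ?_ ?_ hCf
  · filter_upwards [eventually_gt_atTop 1] with x hx
    exact (mul_pos (hf x hx) (hκ x hx).1).le
  · filter_upwards [eventually_gt_atTop 1] with x hx
    calc (f x * κ x) ^ 2 ≤ σ x * f x :=
          sq_mul_le_of_mul_tan_eq (hκ x hx).1 (hf x hx) (hκ x hx).2 (heq x hx)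
      _ ≤ C * f x := mul_le_mul_of_nonneg_right (hC x hx) (hf x hx).le

/-- Let `f, σ, κ : (1,∞) → ℝ` be such that for every `x > 1`, `f(x) > 0`, `σ(x) > 0`,
`κ(x) ∈ (0, π/(2 f(x)))` and `κ(x) · tan(κ(x) f(x)) = σ(x)`. If `σ` is bounded and
`f(x) → 0` as `x → ∞`, then `f(x)·κ(x) → 0` as `x → ∞`. -/
theorem stmt_11 (f σ κ : ℝ → ℝ)
    (hf : ∀ x ∈ Set.Ioi (1 : ℝ), 0 < f x)
    (hσ : ∀ x ∈ Set.Ioi (1 : ℝ), 0 < σ x)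
    (hκ : ∀ x ∈ Set.Ioi (1 : ℝ), κ x ∈ Set.Ioo 0 (π / (2 * f x)))
    (heq : ∀ x ∈ Set.Ioi (1 : ℝ), κ x * Real.tan (κ x * f x) = σ x)
    (hσbdd : ∃ C : ℝ, ∀ x ∈ Set.Ioi (1 : ℝ), σ x ≤ C)
    (hf0 : Filter.Tendsto f Filter.atTop (nhds 0)) :
    Filter.Tendsto (fun x => f x * κ x) Filter.atTop (nhds 0) :=
  stmt_11_general f σ κ hf hκ heq hσbdd hf0
end
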